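/- arXiv:math/0207250 — 2 statements merged into one kernel-verified Lean document; each statement's English description precedes it below -/
import Mathlib

section
/- Consider the quiver Q_1 on 3 vertices forming an oriented 3-cycle in both directions (each pair of adjacent vertices has one arrow each way around the triangle, i.e. arrows v₁→v₂, v₂→v₃, v₃→v₁ and v₁→v₃, v₃→v₂, v₂→v₁). The number of primitive oriented cycles (oriented cycles that cannot be decomposed as a concatenation of shorter oriented cycles at their vertices) in Q_1 is 5. -/
/-- An edge of a quiver with arrow-count function `a : V → V → ℕ` is a triple
`(s, t, k)` with `k < a s t`. A list of such triples is an oriented cycle if it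
is nonempty, every entry is a genuine arrow, consecutive arrows are composable,
and the last arrow ends where the first one starts. -/
def IsOrientedCycle {V : Type*} (a : V → V → ℕ) (l : List (V × V × ℕ)) : Prop :=
  l ≠ [] ∧ (∀ e ∈ l, e.2.2 < a e.1 e.2.1) ∧
    l.Chain' (fun e f => e.2.1 = f.1) ∧
    l.getLast?.map (fun e => e.2.1) = l.head?.map (fun e => e.1)

/-- An oriented cycle is primitive if no cyclic rotation of it decomposes as the
concatenation of two nontrivial oriented cycles. -/
def IsPrimitiveCycle {V : Type*} (a : V → V → ℕ) (l : List (V × V × ℕ)) : Prop :=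
  IsOrientedCycle a l ∧
    ¬ ∃ (k : ℕ) (l₁ l₂ : List (V × V × ℕ)),
        IsOrientedCycle a l₁ ∧ IsOrientedCycle a l₂ ∧ l.rotate k = l₁ ++ l₂

/-- Cyclic-rotation relation on primitive cycles: the number of primitive
oriented cycles of the quiver is the number of classes of this relation. -/
def CycleRot {V : Type*} (a : V → V → ℕ)
    (l l' : {l : List (V × V × ℕ) // IsPrimitiveCycle a l}) : Prop :=
  ∃ k, l.1.rotate k = l'.1

/-!
If two arrows of an oriented cycle start at the same vertex, rotating the cycle to begin at
the first of them and cutting it before the second writes it as a concatenation of two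
oriented cycles. So a primitive cycle visits each vertex at most once, and in `Q_1` has
length at most 3. As `Q_1` has no loops, every oriented cycle has length at least 2, so
conversely no cycle of length 2 or 3 splits. Up to rotation these are the three 2-cycles
and the two oriented triangles.
-/

section

variable {V : Type*} {a : V → V → ℕ} {l l₁ l₂ : List (V × V × ℕ)}

theorem isOrientedCycle_iff : IsOrientedCycle a l ↔ l ≠ [] ∧ (∀ e ∈ l, e.2.2 < a e.1 e.2.1) ∧
    l.IsChain (fun e f => e.2.1 = f.1) ∧
    l.getLast?.map (fun e => e.2.1) = l.head?.map (fun e => e.1) :=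
  Iff.rfl

theorem isOrientedCycle_append_iff (h₁ : l₁ ≠ []) (h₂ : l₂ ≠ []) :
    IsOrientedCycle a (l₁ ++ l₂) ↔
      (∀ e ∈ l₁ ++ l₂, e.2.2 < a e.1 e.2.1) ∧
      l₁.IsChain (fun e f => e.2.1 = f.1) ∧ l₂.IsChain (fun e f => e.2.1 = f.1) ∧
      (l₁.getLast h₁).2.1 = (l₂.head h₂).1 ∧ (l₂.getLast h₂).2.1 = (l₁.head h₁).1 := by
  simp only [isOrientedCycle_iff, List.isChain_append, List.getLast?_eq_some_getLast h₁,
    List.head?_eq_some_head h₂, List.getLast?_append_of_ne_nil _ h₂,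
    List.head?_append_of_ne_nil _ h₁, List.getLast?_eq_some_getLast h₂, List.head?_eq_some_head h₁]
  simp [h₁, and_assoc]

theorem IsOrientedCycle.append_comm (h : IsOrientedCycle a (l₁ ++ l₂)) :
    IsOrientedCycle a (l₂ ++ l₁) := by
  rcases eq_or_ne l₁ [] with rfl | h₁
  · simpa using h
  rcases eq_or_ne l₂ [] with rfl | h₂
  · simpa using h
  rw [isOrientedCycle_append_iff h₁ h₂] at h
  rw [isOrientedCycle_append_iff h₂ h₁]
  simp only [List.mem_append] at h ⊢
  exact ⟨fun e he => h.1 e he.symm, h.2.2.1, h.2.1, h.2.2.2.2, h.2.2.2.1⟩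

theorem IsOrientedCycle.rotate (h : IsOrientedCycle a l) (n : ℕ) :
    IsOrientedCycle a (l.rotate n) := by
  rw [List.rotate_eq_drop_append_take_mod]
  rw [← List.take_append_drop (n % l.length) l] at h
  exact h.append_comm

theorem IsOrientedCycle.of_append (h : IsOrientedCycle a (l₁ ++ l₂)) (h₁ : l₁ ≠ [])
    (h₂ : l₂ ≠ []) (hs : (l₁.head h₁).1 = (l₂.head h₂).1) :
    IsOrientedCycle a l₁ ∧ IsOrientedCycle a l₂ := by
  rw [isOrientedCycle_append_iff h₁ h₂] at h
  obtain ⟨harr, hc₁, hc₂, hlink₁, hlink₂⟩ := h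
  refine ⟨⟨h₁, fun e he => harr e (List.mem_append_left _ he), hc₁, ?_⟩,
    ⟨h₂, fun e he => harr e (List.mem_append_right _ he), hc₂, ?_⟩⟩
  · simp [List.getLast?_eq_some_getLast h₁, List.head?_eq_some_head h₁, hlink₁, hs]
  · simp [List.getLast?_eq_some_getLast h₂, List.head?_eq_some_head h₂, hlink₂, hs]

theorem IsOrientedCycle.not_isPrimitiveCycle_of_fst_eq (h : IsOrientedCycle a l) {i j : ℕ}
    (hij : i < j) (hj : j < l.length) (hfst : l[i].1 = l[j].1) : ¬ IsPrimitiveCycle a l := by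
  rintro ⟨-, hsplit⟩
  have hlen : (l.rotate i).length = l.length := List.length_rotate l i
  have htake : (l.rotate i).take (j - i) ≠ [] := by
    rw [← List.length_pos_iff, List.length_take, hlen]; omega
  have hdrop : (l.rotate i).drop (j - i) ≠ [] := by
    rw [← List.length_pos_iff, List.length_drop, hlen]; omega
  have hcyc : IsOrientedCycle a ((l.rotate i).take (j - i) ++ (l.rotate i).drop (j - i)) := by
    rw [List.take_append_drop]; exact h.rotate i
  have hs :
      (((l.rotate i).take (j - i)).head htake).1 = (((l.rotate i).drop (j - i)).head hdrop).1 := by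
    rw [List.head_take, List.head_drop, List.head_eq_getElem]
    simpa only [List.getElem_rotate, Nat.zero_add, Nat.sub_add_cancel hij.le, Nat.mod_eq_of_lt hj,
      Nat.mod_eq_of_lt (hij.trans hj)] using hfst
  obtain ⟨h₁, h₂⟩ := hcyc.of_append htake hdrop hs
  exact hsplit ⟨i, _, _, h₁, h₂, (List.take_append_drop _ _).symm⟩

theorem IsPrimitiveCycle.length_le_card [Fintype V] (h : IsPrimitiveCycle a l) :
    l.length ≤ Fintype.card V := by
  by_contra! hcard
  obtain ⟨x, y, hxy, hfst⟩ :=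
    Fintype.exists_ne_map_eq_of_card_lt (fun k : Fin l.length => l[k].1) (by simpa using hcard)
  rcases lt_or_gt_of_ne (Fin.val_injective.ne hxy) with hlt | hlt
  · exact h.1.not_isPrimitiveCycle_of_fst_eq hlt y.2 hfst h
  · exact h.1.not_isPrimitiveCycle_of_fst_eq hlt x.2 hfst.symm h

theorem IsOrientedCycle.two_le_length (hloop : ∀ v, a v v = 0) (h : IsOrientedCycle a l) :
    2 ≤ l.length := by
  obtain ⟨hne, harr, -, hclose⟩ := h
  match l, hne with
  | [e], _ =>
    have : e.2.1 = e.1 := by simpa using hclose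
    simpa [this, hloop] using harr e
  | _ :: _ :: _, _ => simp

theorem IsOrientedCycle.isPrimitiveCycle_of_length_lt_four (hloop : ∀ v, a v v = 0)
    (h : IsOrientedCycle a l) (hl : l.length < 4) : IsPrimitiveCycle a l := by
  refine ⟨h, ?_⟩
  rintro ⟨k, l₁, l₂, h₁, h₂, hrot⟩
  have := congrArg List.length hrot
  simp only [List.length_rotate, List.length_append] at this
  have := h₁.two_le_length hloop
  have := h₂.two_le_length hloop
  omega

theorem cycleRot_equivalence : Equivalence (CycleRot a) :=
  ⟨fun l => List.IsRotated.refl l.1, List.IsRotated.symm, List.IsRotated.trans⟩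

theorem card_quot_cycleRot_eq {n : ℕ} (reps : Fin n → List (V × V × ℕ))
    (hprim : ∀ i, IsPrimitiveCycle a (reps i))
    (hsurj : ∀ l, IsPrimitiveCycle a l → ∃ i, reps i ~r l)
    (hinj : ∀ i j, reps i ~r reps j → i = j) : Nat.card (Quot (CycleRot a)) = n := by
  rw [← Nat.card_fin n]
  refine (Nat.card_eq_of_bijective (fun i => Quot.mk _ ⟨reps i, hprim i⟩) ⟨?_, ?_⟩).symm
  · intro i j hij
    exact hinj i j ((cycleRot_equivalence.eqvGen_iff).mp (Quot.eqvGen_exact hij))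
  · rintro ⟨l⟩
    obtain ⟨i, hi⟩ := hsurj l.1 l.2
    exact ⟨i, Quot.sound hi⟩

theorem isOrientedCycle_pair_iff {e f : V × V × ℕ} :
    IsOrientedCycle a [e, f] ↔
      e.2.2 < a e.1 e.2.1 ∧ f.2.2 < a f.1 f.2.1 ∧ e.2.1 = f.1 ∧ f.2.1 = e.1 := by
  simp [isOrientedCycle_iff, and_assoc]

theorem isOrientedCycle_triple_iff {e f g : V × V × ℕ} :
    IsOrientedCycle a [e, f, g] ↔
      e.2.2 < a e.1 e.2.1 ∧ f.2.2 < a f.1 f.2.1 ∧ g.2.2 < a g.1 g.2.1 ∧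
        e.2.1 = f.1 ∧ f.2.1 = g.1 ∧ g.2.1 = e.1 := by
  simp [isOrientedCycle_iff, and_assoc]

end

def bidirectedTriangle : Fin 3 → Fin 3 → ℕ := fun i j => if i = j then 0 else 1

theorem bidirectedTriangle_self (v : Fin 3) : bidirectedTriangle v v = 0 :=
  if_pos rfl

theorem lt_bidirectedTriangle_iff {s t : Fin 3} {k : ℕ} :
    k < bidirectedTriangle s t ↔ s ≠ t ∧ k = 0 := by
  unfold bidirectedTriangle
  split_ifs <;> simp [*]

def bidirectedTriangleCycles : Fin 5 → List (Fin 3 × Fin 3 × ℕ) :=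
  ![[(0, 1, 0), (1, 0, 0)], [(0, 2, 0), (2, 0, 0)], [(1, 2, 0), (2, 1, 0)],
    [(0, 1, 0), (1, 2, 0), (2, 0, 0)], [(0, 2, 0), (2, 1, 0), (1, 0, 0)]]

theorem isPrimitiveCycle_bidirectedTriangleCycles (i : Fin 5) :
    IsPrimitiveCycle bidirectedTriangle (bidirectedTriangleCycles i) := by
  refine IsOrientedCycle.isPrimitiveCycle_of_length_lt_four bidirectedTriangle_self ?_ ?_ <;>
    fin_cases i <;>
    simp [bidirectedTriangleCycles, isOrientedCycle_pair_iff, isOrientedCycle_triple_iff,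
      lt_bidirectedTriangle_iff]

theorem bidirectedTriangleCycles_isRotated_pair :
    ∀ s t : Fin 3, s ≠ t → ∃ i, bidirectedTriangleCycles i ~r [(s, t, 0), (t, s, 0)] := by
  decide

theorem bidirectedTriangleCycles_isRotated_triple :
    ∀ s t u : Fin 3, s ≠ t → t ≠ u → u ≠ s →
      ∃ i, bidirectedTriangleCycles i ~r [(s, t, 0), (t, u, 0), (u, s, 0)] := by
  decide

theorem bidirectedTriangleCycles_eq_of_isRotated :
    ∀ i j, bidirectedTriangleCycles i ~r bidirectedTriangleCycles j → i = j := by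
  decide

theorem IsPrimitiveCycle.exists_bidirectedTriangleCycles_isRotated
    {l : List (Fin 3 × Fin 3 × ℕ)} (h : IsPrimitiveCycle bidirectedTriangle l) :
    ∃ i, bidirectedTriangleCycles i ~r l := by
  have hlower := h.1.two_le_length bidirectedTriangle_self
  have hupper : l.length ≤ 3 := by simpa using h.length_le_card
  obtain hl | hl : l.length = 2 ∨ l.length = 3 := by omega
  · obtain ⟨⟨s, t, k⟩, ⟨s', t', k'⟩, rfl⟩ := List.length_eq_two.mp hl
    have hcyc := isOrientedCycle_pair_iff.mp h.1
    simp only [lt_bidirectedTriangle_iff] at hcyc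
    obtain ⟨⟨hst, rfl⟩, ⟨-, rfl⟩, rfl, rfl⟩ := hcyc
    exact bidirectedTriangleCycles_isRotated_pair _ _ hst
  · obtain ⟨⟨s, t, k⟩, ⟨s', t', k'⟩, ⟨s'', t'', k''⟩, rfl⟩ := List.length_eq_three.mp hl
    have hcyc := isOrientedCycle_triple_iff.mp h.1
    simp only [lt_bidirectedTriangle_iff] at hcyc
    obtain ⟨⟨hst, rfl⟩, ⟨htu, rfl⟩, ⟨hus, rfl⟩, rfl, rfl, rfl⟩ := hcyc
    exact bidirectedTriangleCycles_isRotated_triple _ _ _ hst htu hus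

/-- The quiver of type `4_{3a}` (three vertices, one arrow each way between
every pair of distinct vertices, i.e. both oriented triangles) has exactly 5
primitive oriented cycles. -/
theorem primitive_cycles_type4_3a :
    let a : Fin 3 → Fin 3 → ℕ := fun i j => if i = j then 0 else 1
    Nat.card (Quot (CycleRot a)) = 5 :=
  card_quot_cycleRot_eq bidirectedTriangleCycles isPrimitiveCycle_bidirectedTriangleCycles
    (fun _ h => h.exists_bidirectedTriangleCycles_isRotated)
    bidirectedTriangleCycles_eq_of_isRotated
end

section
/- Let Q be a strongly connected quiver on k ≥ 2 vertices and α a dimension vector with all α_v ≥ 1, such that for every vertex v, χ_Q(ε_v, α) ≤ −1 and χ_Q(α, ε_v) ≤ −1, and suppose no vertex has loops. Then 1 − χ_Q(α,α) ≥ 1 + ∑_v α_v. -/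
/-- Counting lemma, loop-free case: for a strongly connected loop-free quiver on
`k ≥ 2` vertices with dimension vector `α` (all `α_v ≥ 1`) satisfying
`χ_Q(ε_v, α) ≤ −1` and `χ_Q(α, ε_v) ≤ −1` for every vertex `v`, one has
`1 − χ_Q(α,α) ≥ 1 + ∑_v α_v`. -/
theorem counting_lemma_loop_free {V : Type*} [Fintype V] [DecidableEq V]
    (hV : 2 ≤ Fintype.card V)
    (a : V → V → ℕ) (hloop : ∀ v, a v v = 0)
    (hconn : ∀ v w : V, Relation.ReflTransGen (fun x y => 0 < a x y) v w)
    (α : V → ℤ) (hα : ∀ v, 1 ≤ α v)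
    (hin : ∀ v : V, α v - ∑ w, (a v w : ℤ) * α w ≤ -1)
    (hout : ∀ v : V, α v - ∑ w, (a w v : ℤ) * α w ≤ -1) :
    1 - (∑ v, α v * α v - ∑ v, ∑ w, (a v w : ℤ) * α v * α w) ≥
      1 + ∑ v, α v := by
  have key : ∀ v, α v * α v - ∑ w, (a v w : ℤ) * α v * α w ≤ -α v := by
    intro v
    have h0 : (0:ℤ) ≤ α v := le_trans zero_le_one (hα v)
    have h := mul_le_mul_of_nonneg_left (hin v) h0
    have hs : α v * ∑ w, (a v w : ℤ) * α w = ∑ w, (a v w : ℤ) * α v * α w := by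
      rw [Finset.mul_sum]; exact Finset.sum_congr rfl fun w _ => by ring
    nlinarith [hs, h]
  have h := Finset.sum_le_sum (fun v (_ : v ∈ Finset.univ) => key v)
  rw [Finset.sum_sub_distrib, Finset.sum_neg_distrib] at h
  linarith
end
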